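/- arXiv:1710.07127 — 3 statements merged into one kernel-verified Lean document; each statement's English description precedes it below -/
import Mathlib

section
/- For every nonnegative integer n and every complex number z, ∑_{k=0}^{⌊n/2⌋} 4^{n-2k} · C(n,2k) · B_{n-2k}(z) = ∑_{j=0}^{n} (-1)^{n-j} · 2^j · C(n,j) · B_j(2z) = 2^n · B_n(2z - 1/2), where C(n,k) denotes the binomial coefficient. -/
open Finset

/-- The Bernoulli polynomial `B_n` evaluated at a complex number `z`,
with generating function `t·e^{zt}/(e^t−1) = ∑_{n≥0} B_n(z)·t^n/n!`. -/
noncomputable def bernoulliPoly (n : ℕ) (z : ℂ) : ℂ :=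
  Polynomial.aeval z (Polynomial.bernoulli n)

/-- The Euler polynomial `E_n` evaluated at a complex number `z`,
with generating function `2·e^{zt}/(e^t+1) = ∑_{n≥0} E_n(z)·t^n/n!`,
given by the explicit formula `E_n(z) = ∑_{k=0}^n 2^{-k} ∑_{j=0}^k (-1)^j C(k,j)(z+j)^n`. -/
noncomputable def eulerPoly (n : ℕ) (z : ℂ) : ℂ :=
  ∑ k ∈ range (n + 1), (1 / 2 ^ k : ℂ) *
    ∑ j ∈ range (k + 1), (-1) ^ j * (k.choose j : ℂ) * (z + j) ^ n

/-!
Everything comes from the exponential generating function `G_x(t) = t e^{xt}/(e^t - 1)`.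
The relation `G_{x+y}(t) = G_x(t) e^{yt}` gives the addition formula
`B_n(x + y) = ∑ C(n,j) B_j(x) y^{n-j}`, and `e^{2t} - 1 = (e^t - 1)(e^t + 1)` gives
`G_x(2t) + G_{x+1/2}(2t) = 2 G_{2x}(t)`, i.e. the duplication formula
`2^n (B_n(x) + B_n(x + 1/2)) = 2 B_n(2x)`.
The addition formula with `y = -1/2` is the second identity. Adding its instances
`y = ±1/4` at `x = z`, the odd-index terms cancel, so the first sum is
`4^n (B_n(z - 1/4) + B_n(z + 1/4)) / 2`, which duplication at `z - 1/4` turns into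
`2^n B_n(2z - 1/2)`.
-/

open PowerSeries Nat

section GeneratingFunction

variable {K : Type*} [Field K] [CharZero K]

noncomputable def bernoulliEGF (x : K) : K⟦X⟧ :=
  mk fun n => Polynomial.aeval x ((1 / n ! : ℚ) • Polynomial.bernoulli n)

theorem coeff_bernoulliEGF (n : ℕ) (x : K) :
    coeff n (bernoulliEGF x) = (n ! : K)⁻¹ * Polynomial.aeval x (Polynomial.bernoulli n) := by
  simp [bernoulliEGF, Rat.smul_def, map_smul]

theorem bernoulliEGF_mul_exp_sub_one (x : K) :
    bernoulliEGF x * (exp K - 1) = X * rescale x (exp K) :=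
  Polynomial.bernoulli_generating_function x

theorem rescale_exp_sub_one_ne_zero {c : K} (hc : c ≠ 0) : rescale c (exp K) - 1 ≠ 0 := by
  intro h
  have := congrArg (coeff 1) h
  simp [coeff_exp, hc] at this

theorem exp_sub_one_ne_zero : exp K - 1 ≠ 0 := by
  simpa using rescale_exp_sub_one_ne_zero (one_ne_zero' K)

theorem bernoulliEGF_add (x y : K) :
    bernoulliEGF (x + y) = bernoulliEGF x * rescale y (exp K) := by
  refine mul_right_cancel₀ exp_sub_one_ne_zero ?_
  rw [bernoulliEGF_mul_exp_sub_one, ← exp_mul_exp_eq_exp_add, mul_right_comm,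
    bernoulliEGF_mul_exp_sub_one, mul_assoc]

theorem rescale_two_bernoulliEGF_add_bernoulliEGF_add_half (x : K) :
    rescale 2 (bernoulliEGF x + bernoulliEGF (x + 1 / 2)) = C 2 * bernoulliEGF (2 * x) := by
  have hexp_two : rescale (2 : K) (exp K) = exp K * exp K := by
    simpa [rescale_one, one_add_one_eq_two] using (exp_mul_exp_eq_exp_add (1 : K) 1).symm
  refine mul_right_cancel₀ (rescale_exp_sub_one_ne_zero (two_ne_zero' K)) ?_
  calc rescale 2 (bernoulliEGF x + bernoulliEGF (x + 1 / 2)) * (rescale 2 (exp K) - 1)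
      = rescale 2 ((bernoulliEGF x + bernoulliEGF (x + 1 / 2)) * (exp K - 1)) := by
        rw [map_mul, map_sub, map_one]
    _ = C 2 * X * (rescale (2 * x) (exp K) * (1 + exp K)) := by
        rw [add_mul, bernoulliEGF_mul_exp_sub_one, bernoulliEGF_mul_exp_sub_one, map_add,
          map_mul, map_mul, rescale_X, rescale_rescale, rescale_rescale,
          show (x + 1 / 2) * 2 = x * 2 + 1 by ring, ← exp_mul_exp_eq_exp_add, rescale_one,
          RingHom.id_apply, mul_comm x 2]
        ring
    _ = C 2 * bernoulliEGF (2 * x) * (rescale 2 (exp K) - 1) := by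
        rw [hexp_two, show exp K * exp K - 1 = (exp K - 1) * (1 + exp K) by ring,
          ← mul_assoc _ (exp K - 1), mul_assoc (C 2) (bernoulliEGF (2 * x)),
          bernoulliEGF_mul_exp_sub_one]
        ring

end GeneratingFunction

theorem sum_range_one_add_neg_one_pow_mul {R : Type*} [CommRing R] (n : ℕ) (f : ℕ → R) :
    ∑ i ∈ range (n + 1), (1 + (-1) ^ i) * f i = 2 * ∑ k ∈ range (n / 2 + 1), f (2 * k) := by
  have hinj : Set.InjOn (2 * ·) (range (n / 2 + 1) : Set ℕ) := fun a _ b _ h => by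
    simpa using h
  symm
  calc 2 * ∑ k ∈ range (n / 2 + 1), f (2 * k)
      = ∑ k ∈ range (n / 2 + 1), (1 + (-1) ^ (2 * k)) * f (2 * k) := by
        rw [mul_sum]
        refine sum_congr rfl fun k _ => ?_
        rw [pow_mul, neg_one_sq, one_pow, one_add_one_eq_two]
    _ = ∑ i ∈ (range (n / 2 + 1)).image (2 * ·), (1 + (-1) ^ i) * f i :=
        (sum_image (f := fun i => (1 + (-1) ^ i) * f i) hinj).symm
    _ = ∑ i ∈ range (n + 1), (1 + (-1) ^ i) * f i := by
        refine sum_subset (fun i hi => ?_) fun i hi hi' => ?_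
        · obtain ⟨k, hk, rfl⟩ := mem_image.mp hi
          simp only [mem_range] at hk ⊢
          omega
        · have hodd : Odd i := by
            rw [← Nat.not_even_iff_odd]
            rintro ⟨k, rfl⟩
            refine hi' (mem_image.mpr ⟨k, ?_, by ring⟩)
            simp only [mem_range] at hi ⊢
            omega
          rw [hodd.neg_one_pow, add_neg_cancel, zero_mul]

section Identities

variable {K : Type*} [Field K] [CharZero K]

local notation "𝔹" n:max x:max => Polynomial.aeval x (Polynomial.bernoulli n)

theorem aeval_bernoulli_add (n : ℕ) (x y : K) :
    𝔹 n (x + y) = ∑ j ∈ range (n + 1), (n.choose j : K) * 𝔹 j x * y ^ (n - j) := by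
  have h := congrArg (coeff n) (bernoulliEGF_add x y)
  rw [coeff_mul, Nat.sum_antidiagonal_eq_sum_range_succ (fun i j => coeff i _ * coeff j _)]
    at h
  simp only [coeff_bernoulliEGF, coeff_rescale, coeff_exp, one_div, map_inv₀, map_natCast] at h
  have hn : (n ! : K) ≠ 0 := Nat.cast_ne_zero.2 (factorial_ne_zero n)
  rw [← mul_right_inj' (inv_ne_zero hn), h, mul_sum]
  refine sum_congr rfl fun j hj => ?_
  rw [Nat.cast_choose K (mem_range_succ_iff.mp hj)]
  field_simp

theorem aeval_bernoulli_add_aeval_bernoulli_add_half (n : ℕ) (x : K) :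
    2 ^ n * (𝔹 n x + 𝔹 n (x + 1 / 2)) = 2 * 𝔹 n (2 * x) := by
  have h := congrArg (coeff n) (rescale_two_bernoulliEGF_add_bernoulliEGF_add_half x)
  simp only [coeff_rescale, map_add, coeff_C_mul, coeff_bernoulliEGF] at h
  have hn : (n ! : K) ≠ 0 := Nat.cast_ne_zero.2 (factorial_ne_zero n)
  rw [← mul_right_inj' (inv_ne_zero hn)]
  linear_combination h

theorem pow_mul_aeval_bernoulli_add_div {c : K} (hc : c ≠ 0) (n : ℕ) (x y : K) :
    c ^ n * 𝔹 n (x + y / c)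
      = ∑ j ∈ range (n + 1), (n.choose j : K) * c ^ j * 𝔹 j x * y ^ (n - j) := by
  rw [aeval_bernoulli_add, mul_sum]
  refine sum_congr rfl fun j hj => ?_
  rw [← pow_mul_pow_sub c (mem_range_succ_iff.mp hj), div_pow]
  field_simp

theorem pow_mul_aeval_bernoulli_add_div_add_sub_div {c : K} (hc : c ≠ 0) (n : ℕ) (x y : K) :
    c ^ n * (𝔹 n (x + y / c) + 𝔹 n (x - y / c))
      = 2 * ∑ k ∈ range (n / 2 + 1),
          c ^ (n - 2 * k) * (n.choose (2 * k) : K) * 𝔹 (n - 2 * k) x * y ^ (2 * k) := by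
  rw [mul_add, sub_eq_add_neg, ← neg_div, pow_mul_aeval_bernoulli_add_div hc,
    pow_mul_aeval_bernoulli_add_div hc, ← sum_add_distrib, ← sum_range_reflect]
  refine (sum_congr rfl fun j hj => ?_).trans <| sum_range_one_add_neg_one_pow_mul n
    fun i => c ^ (n - i) * (n.choose i : K) * 𝔹 (n - i) x * y ^ i
  have hj : j ≤ n := mem_range_succ_iff.mp hj
  simp only [add_tsub_cancel_right, Nat.sub_sub_self hj, choose_symm hj, neg_pow y]
  ring

end Identities

theorem stmt0 (n : ℕ) (z : ℂ) :
    (∑ k ∈ range (n / 2 + 1), (4 : ℂ) ^ (n - 2 * k) * (n.choose (2 * k) : ℂ) *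
        bernoulliPoly (n - 2 * k) z
      = ∑ j ∈ range (n + 1), (-1 : ℂ) ^ (n - j) * 2 ^ j * (n.choose j : ℂ) *
        bernoulliPoly j (2 * z)) ∧
    (∑ j ∈ range (n + 1), (-1 : ℂ) ^ (n - j) * 2 ^ j * (n.choose j : ℂ) *
        bernoulliPoly j (2 * z)
      = 2 ^ n * bernoulliPoly n (2 * z - 1 / 2)) := by
  simp only [bernoulliPoly]
  refine (fun (hsecond : _ = _) (hfirst : _ = _) => ⟨hfirst.trans hsecond.symm, hsecond⟩) ?_ ?_
  · rw [show 2 * z - 1 / 2 = 2 * z + -1 / 2 by ring, pow_mul_aeval_bernoulli_add_div two_ne_zero]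
    exact sum_congr rfl fun j _ => by ring
  have heven := pow_mul_aeval_bernoulli_add_div_add_sub_div (by norm_num : (4 : ℂ) ≠ 0) n z 1
  have hdup := aeval_bernoulli_add_aeval_bernoulli_add_half n (z - 1 / 4)
  rw [show z - 1 / 4 + 1 / 2 = z + 1 / 4 by ring, show 2 * (z - 1 / 4) = 2 * z - 1 / 2 by ring]
    at hdup
  simp only [one_pow, mul_one] at heven
  rw [show (4 : ℂ) ^ n = 2 ^ n * 2 ^ n by rw [← mul_pow]; norm_num, mul_assoc, add_comm, hdup]
    at heven
  linear_combination -heven / 2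
end

section
/- For every nonnegative integer n and every complex number z, ∑_{k=0}^{⌊n/2⌋} (4^{n-2k}/(2k+1)) · C(n,2k) · B_{n-2k}(z) = ∑_{j=0}^{n} (-1)^{n-j} · 2^j · C(n,j) · E_j(2z) = 2^n · E_n(2z - 1/2), where C(n,k) denotes the binomial coefficient. -/
open Finset

/-!
Both sides of the first identity are polynomials `f` satisfying
`f z + f (z + 1/2) = 2 (4z - 1)^n`, and a polynomial with `p (x + c) = -p x` vanishes (its
leading coefficient equals its negative). On the Bernoulli side the terms are the odd Taylor
coefficients of `B_{n+1}` at `z` with step `1/4`, so the sum is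
`4^{n+1} (B_{n+1}(z + 1/4) - B_{n+1}(z - 1/4)) / (2(n+1))`, and
`B_{n+1}(x + 1) - B_{n+1}(x) = (n+1) x^n` telescopes. On the Euler side,
`E_n(x) = ∑_k (-1/2)^k Δ^k[x^n]` gives `E_n(x) + E_n(x + 1) = 2 x^n`.
The second identity is the translation formula `E_n(x + y) = ∑_j C(n,j) y^{n-j} E_j(x)`
at `y = -1/2`.
-/

namespace Polynomial

theorem eq_zero_of_forall_eval_add_eq_neg {R : Type*} [CommRing R] [IsDomain R] [CharZero R]
    {p : R[X]} {c : R} (h : ∀ x, p.eval (x + c) = -p.eval x) : p = 0 := by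
  have hcomp : p.comp (X + C c) = -p := funext fun x => by simp [h]
  have hlc := leadingCoeff_comp (p := p) (q := X + C c) (by simp)
  rw [hcomp, leadingCoeff_neg, (monic_X_add_C c).leadingCoeff, one_pow, mul_one] at hlc
  exact leadingCoeff_eq_zero.mp (self_eq_neg.mp hlc.symm)

theorem eval_add_eq_sum_hasseDeriv {R : Type*} [CommRing R] {p : R[X]} {n : ℕ}
    (hn : p.natDegree < n) (x y : R) :
    p.eval (x + y) = ∑ k ∈ range n, (hasseDeriv k p).eval x * y ^ k := by
  rw [add_comm, ← taylor_eval, eval_eq_sum_range' (by rwa [natDegree_taylor])]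
  simp_rw [taylor_coeff]

theorem hasseDeriv_map {R S : Type*} [Semiring R] [Semiring S] (f : R →+* S) (k : ℕ)
    (p : R[X]) :
    hasseDeriv k (p.map f) = (hasseDeriv k p).map f := by
  ext n
  simp [hasseDeriv_coeff]

theorem iterate_derivative_bernoulli (k n : ℕ) :
    derivative^[k] (bernoulli n) = (n.descFactorial k : ℚ[X]) * bernoulli (n - k) := by
  induction k with
  | zero => simp
  | succ k ih =>
    rw [Function.iterate_succ_apply', ih, derivative_natCast_mul, derivative_bernoulli,
      Nat.descFactorial_succ, Nat.sub_sub]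
    push_cast
    ring

theorem hasseDeriv_bernoulli (k n : ℕ) :
    hasseDeriv k (bernoulli n) = (n.choose k : ℚ[X]) * bernoulli (n - k) := by
  have h := congr_fun (factorial_smul_hasseDeriv (R := ℚ) (k := k)) (bernoulli n)
  rw [LinearMap.smul_apply, iterate_derivative_bernoulli, Nat.descFactorial_eq_factorial_mul_choose,
    nsmul_eq_mul, Nat.cast_mul, mul_assoc] at h
  exact mul_left_cancel₀ (Nat.cast_ne_zero.mpr k.factorial_ne_zero) h

theorem natDegree_bernoulli_le (n : ℕ) : (bernoulli n).natDegree ≤ n :=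
  natDegree_sum_le_of_forall_le _ _ fun i _ => (natDegree_monomial_le _).trans (Nat.sub_le n i)

end Polynomial

theorem bernoulliPoly_eq_eval_map (n : ℕ) (z : ℂ) :
    bernoulliPoly n z = ((Polynomial.bernoulli n).map (algebraMap ℚ ℂ)).eval z :=
  (Polynomial.eval_map_algebraMap _ _).symm

theorem bernoulliPoly_add (n : ℕ) (x y : ℂ) :
    bernoulliPoly n (x + y)
      = ∑ k ∈ range (n + 1), n.choose k * bernoulliPoly (n - k) x * y ^ k := by
  have hdeg : ((Polynomial.bernoulli n).map (algebraMap ℚ ℂ)).natDegree < n + 1 :=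
    Nat.lt_succ_of_le (Polynomial.natDegree_map_le.trans (Polynomial.natDegree_bernoulli_le n))
  simp_rw [bernoulliPoly_eq_eval_map, Polynomial.eval_add_eq_sum_hasseDeriv hdeg,
    Polynomial.hasseDeriv_map, Polynomial.hasseDeriv_bernoulli, Polynomial.map_mul,
    Polynomial.map_natCast, Polynomial.eval_mul, Polynomial.eval_natCast]

theorem bernoulliPoly_add_one (n : ℕ) (x : ℂ) :
    bernoulliPoly (n + 1) (x + 1) = bernoulliPoly (n + 1) x + (n + 1) * x ^ n := by
  have h := congr_arg (Polynomial.aeval x) (Polynomial.bernoulli_comp_one_add_X (n + 1))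
  simp only [Polynomial.aeval_comp, map_add, map_one, Polynomial.aeval_X, map_nsmul, map_pow] at h
  rw [bernoulliPoly, add_comm x, h, bernoulliPoly, nsmul_eq_mul, add_tsub_cancel_right]
  push_cast
  ring

theorem sum_range_odd_eq_sum_range {M : Type*} [AddCommMonoid M] {f : ℕ → M}
    (hf : ∀ j, Even j → f j = 0) (n : ℕ) :
    ∑ k ∈ range (n / 2 + 1), f (2 * k + 1) = ∑ j ∈ range (n + 2), f j := by
  have hpairs : ∀ m, ∑ k ∈ range m, f (2 * k + 1) = ∑ j ∈ range (2 * m), f j := by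
    intro m
    induction m with
    | zero => simp
    | succ m ih =>
      rw [sum_range_succ, ih, mul_add_one, sum_range_succ, sum_range_succ, hf _ (even_two_mul m),
        add_zero]
  rw [hpairs]
  rcases Nat.even_or_odd' n with ⟨m, rfl | rfl⟩
  · rw [show 2 * m / 2 + 1 = m + 1 by omega, mul_add_one]
  · rw [show (2 * m + 1) / 2 + 1 = m + 1 by omega, show 2 * m + 1 + 2 = 2 * (m + 1) + 1 by ring,
      sum_range_succ, hf _ (even_two_mul _), add_zero]

theorem bernoulliPoly_add_sub_bernoulliPoly_sub (n : ℕ) (z h : ℂ) :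
    bernoulliPoly (n + 1) (z + h) - bernoulliPoly (n + 1) (z - h)
      = 2 * (n + 1) * ∑ k ∈ range (n / 2 + 1),
          n.choose (2 * k) / (2 * k + 1) * bernoulliPoly (n - 2 * k) z * h ^ (2 * k + 1) := by
  rw [sub_eq_add_neg z h, bernoulliPoly_add, bernoulliPoly_add, ← sum_sub_distrib,
    ← sum_range_odd_eq_sum_range (fun j hj => by rw [hj.neg_pow, sub_self]), mul_sum]
  refine sum_congr rfl fun k _ => ?_
  have hchoose : ((n + 1).choose (2 * k + 1) : ℂ) * (2 * k + 1) = (n + 1) * n.choose (2 * k) := by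
    exact_mod_cast (Nat.add_one_mul_choose_eq n (2 * k)).symm
  have hk : (2 * k + 1 : ℂ) ≠ 0 := by exact_mod_cast (2 * k).succ_ne_zero
  rw [Odd.neg_pow ⟨k, rfl⟩, show n + 1 - (2 * k + 1) = n - 2 * k by omega]
  field_simp
  linear_combination (2 * bernoulliPoly (n - 2 * k) z * h ^ (2 * k + 1)) * hchoose

theorem sum_neg_one_pow_mul_choose_eq_fwdDiff_iter {R : Type*} [CommRing R] (f : R → R)
    (k : ℕ) (x : R) :
    ∑ j ∈ range (k + 1), (-1) ^ j * (k.choose j : R) * f (x + j)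
      = (-1) ^ k * (fwdDiff 1)^[k] f x := by
  rw [fwdDiff_iter_eq_sum_shift, mul_sum]
  refine sum_congr rfl fun j hj => ?_
  obtain ⟨d, rfl⟩ := Nat.exists_eq_add_of_le (Nat.lt_succ_iff.mp (mem_range.mp hj))
  have hsign : ((-1 : R) ^ d) ^ 2 = 1 := by rw [← pow_mul, pow_mul', neg_one_sq, one_pow]
  simp only [add_tsub_cancel_left, zsmul_eq_mul, nsmul_eq_mul, mul_one]
  push_cast
  linear_combination (-(-1 : R) ^ j * ((j + d).choose j) * f (x + j)) * hsign

theorem eulerPoly_eq_sum_fwdDiff_iter {n N : ℕ} (hN : n ≤ N) (x : ℂ) :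
    eulerPoly n x = ∑ k ∈ range (N + 1), (-1 / 2 : ℂ) ^ k * (fwdDiff 1)^[k] (· ^ n) x := by
  have hterm : ∀ k,
      (1 / 2 ^ k : ℂ) * ∑ j ∈ range (k + 1), (-1) ^ j * (k.choose j : ℂ) * (x + j) ^ n
        = (-1 / 2 : ℂ) ^ k * (fwdDiff 1)^[k] (· ^ n) x := fun k => by
    rw [sum_neg_one_pow_mul_choose_eq_fwdDiff_iter (· ^ n), div_pow]
    ring
  simp_rw [eulerPoly, hterm]
  refine sum_subset (range_subset_range.mpr (by omega)) fun k _ hk => ?_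
  rw [fwdDiff_iter_pow_eq_zero_of_lt (by simp at hk; omega), Pi.zero_apply, mul_zero]

theorem eulerPoly_add_eulerPoly_add_one (n : ℕ) (x : ℂ) :
    eulerPoly n x + eulerPoly n (x + 1) = 2 * x ^ n := by
  have hshift : ∀ k, (fwdDiff 1)^[k] (· ^ n) (x + 1)
      = (fwdDiff 1)^[k] (· ^ n) x + (fwdDiff 1)^[k + 1] (· ^ n) x := by
    intro k
    rw [Function.iterate_succ_apply', fwdDiff]
    ring
  rw [eulerPoly_eq_sum_fwdDiff_iter le_rfl, eulerPoly_eq_sum_fwdDiff_iter le_rfl,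
    ← sum_add_distrib]
  calc _ = ∑ k ∈ range (n + 1), (2 * (-1 / 2 : ℂ) ^ k * (fwdDiff 1)^[k] (· ^ n) x
          - 2 * (-1 / 2 : ℂ) ^ (k + 1) * (fwdDiff 1)^[k + 1] (· ^ n) x) :=
        sum_congr rfl fun k _ => by rw [hshift]; ring
    _ = 2 * x ^ n := by
        rw [sum_range_sub', fwdDiff_iter_pow_eq_zero_of_lt (lt_add_one n)]
        simp

theorem eulerPoly_add (n : ℕ) (x y : ℂ) :
    eulerPoly n (x + y) = ∑ j ∈ range (n + 1), n.choose j * y ^ (n - j) * eulerPoly j x := by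
  have hpow : (fun r : ℂ => (r + y) ^ n)
      = ∑ j ∈ range (n + 1), (n.choose j * y ^ (n - j) : ℂ) • fun r : ℂ => r ^ j := by
    ext r
    simp only [add_pow, Finset.sum_apply, Pi.smul_apply, smul_eq_mul]
    exact sum_congr rfl fun j _ => by ring
  have hdiff : ∀ k, (fwdDiff 1)^[k] (· ^ n) (x + y)
      = ∑ j ∈ range (n + 1), n.choose j * y ^ (n - j) * (fwdDiff 1)^[k] (· ^ j) x := by
    intro k
    rw [← fwdDiff_iter_comp_add, hpow, fwdDiff_iter_finsetSum, Finset.sum_apply]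
    simp [fwdDiff_iter_const_smul]
  rw [eulerPoly_eq_sum_fwdDiff_iter le_rfl]
  simp_rw [hdiff, mul_sum]
  rw [sum_comm]
  refine sum_congr rfl fun j hj => ?_
  rw [eulerPoly_eq_sum_fwdDiff_iter (Nat.lt_succ_iff.mp (mem_range.mp hj)), mul_sum]
  exact sum_congr rfl fun k _ => by ring

noncomputable def bernoulliSum (n : ℕ) (z : ℂ) : ℂ :=
  ∑ k ∈ range (n / 2 + 1), (4 : ℂ) ^ (n - 2 * k) / (2 * k + 1) *
    (n.choose (2 * k) : ℂ) * bernoulliPoly (n - 2 * k) z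

theorem two_mul_add_one_mul_bernoulliSum (n : ℕ) (z : ℂ) :
    2 * (n + 1) * bernoulliSum n z
      = 4 ^ (n + 1) * (bernoulliPoly (n + 1) (z + 1 / 4) - bernoulliPoly (n + 1) (z - 1 / 4)) := by
  rw [bernoulliPoly_add_sub_bernoulliPoly_sub, bernoulliSum, mul_sum, mul_sum, mul_sum]
  refine sum_congr rfl fun k hk => ?_
  have hpow : (4 : ℂ) ^ (n - 2 * k) * 4 ^ (2 * k + 1) = 4 ^ (n + 1) := by
    rw [← pow_add]
    congr 1
    have := mem_range.mp hk
    omega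
  rw [one_div_pow, ← hpow]
  field_simp

theorem bernoulliSum_add_bernoulliSum_add_half (n : ℕ) (z : ℂ) :
    bernoulliSum n z + bernoulliSum n (z + 1 / 2) = 2 * (4 * z - 1) ^ n := by
  have hn : (2 * (n + 1) : ℂ) ≠ 0 := by exact_mod_cast (2 * n + 1).succ_ne_zero
  have h := two_mul_add_one_mul_bernoulliSum n (z + 1 / 2)
  rw [show z + 1 / 2 + 1 / 4 = z - 1 / 4 + 1 by ring, show z + 1 / 2 - 1 / 4 = z + 1 / 4 by ring,
    bernoulliPoly_add_one] at h
  rw [show 4 * z - 1 = 4 * (z - 1 / 4) by ring, mul_pow]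
  apply mul_left_cancel₀ hn
  linear_combination two_mul_add_one_mul_bernoulliSum n z + h

noncomputable def eulerPolynomial (n : ℕ) : Polynomial ℂ :=
  ∑ k ∈ range (n + 1), Polynomial.C (1 / 2 ^ k : ℂ) *
    ∑ j ∈ range (k + 1), Polynomial.C ((-1) ^ j * (k.choose j : ℂ)) *
      (Polynomial.X + Polynomial.C (j : ℂ)) ^ n

theorem eval_eulerPolynomial (n : ℕ) (x : ℂ) : (eulerPolynomial n).eval x = eulerPoly n x := by
  simp [eulerPolynomial, eulerPoly, Polynomial.eval_finsetSum]

theorem bernoulliSum_eq_eulerPoly (n : ℕ) (z : ℂ) :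
    bernoulliSum n z = 2 ^ n * eulerPoly n (2 * z - 1 / 2) := by
  set P : Polynomial ℂ := ∑ k ∈ range (n / 2 + 1),
    Polynomial.C ((4 : ℂ) ^ (n - 2 * k) / (2 * k + 1) * (n.choose (2 * k) : ℂ)) *
      (Polynomial.bernoulli (n - 2 * k)).map (algebraMap ℚ ℂ)
  set Q : Polynomial ℂ :=
    Polynomial.C (2 ^ n) *
      (eulerPolynomial n).comp (Polynomial.C 2 * Polynomial.X - Polynomial.C (1 / 2))
  have hP : ∀ w, P.eval w = bernoulliSum n w := fun w => by
    simp [P, bernoulliSum, Polynomial.eval_finsetSum, bernoulliPoly_eq_eval_map]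
  have hQ : ∀ w, Q.eval w = 2 ^ n * eulerPoly n (2 * w - 1 / 2) := fun w => by
    simp [Q, eval_eulerPolynomial]
  have hPQ : P - Q = 0 := by
    refine Polynomial.eq_zero_of_forall_eval_add_eq_neg (c := 1 / 2) fun w => ?_
    have hE := eulerPoly_add_eulerPoly_add_one n (2 * w - 1 / 2)
    rw [show 2 * w - 1 / 2 + 1 = 2 * (w + 1 / 2) - 1 / 2 by ring] at hE
    have hB := bernoulliSum_add_bernoulliSum_add_half n w
    rw [show 4 * w - 1 = 2 * (2 * w - 1 / 2) by ring, mul_pow] at hB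
    simp only [Polynomial.eval_sub, hP, hQ]
    linear_combination hB - 2 ^ n * hE
  rw [← hP, sub_eq_zero.mp hPQ, hQ]

theorem two_pow_mul_eulerPoly_sub_half (n : ℕ) (x : ℂ) :
    2 ^ n * eulerPoly n (x - 1 / 2)
      = ∑ j ∈ range (n + 1),
          (-1 : ℂ) ^ (n - j) * 2 ^ j * (n.choose j : ℂ) * eulerPoly j x := by
  rw [sub_eq_add_neg, eulerPoly_add, mul_sum]
  refine sum_congr rfl fun j hj => ?_
  obtain ⟨d, rfl⟩ := Nat.exists_eq_add_of_le (Nat.lt_succ_iff.mp (mem_range.mp hj))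
  rw [add_tsub_cancel_left, neg_pow (1 / 2 : ℂ), one_div_pow, pow_add]
  field_simp

theorem stmt1 (n : ℕ) (z : ℂ) :
    (∑ k ∈ range (n / 2 + 1), (4 : ℂ) ^ (n - 2 * k) / (2 * k + 1) *
        (n.choose (2 * k) : ℂ) * bernoulliPoly (n - 2 * k) z
      = ∑ j ∈ range (n + 1), (-1 : ℂ) ^ (n - j) * 2 ^ j * (n.choose j : ℂ) *
        eulerPoly j (2 * z)) ∧
    (∑ j ∈ range (n + 1), (-1 : ℂ) ^ (n - j) * 2 ^ j * (n.choose j : ℂ) *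
        eulerPoly j (2 * z)
      = 2 ^ n * eulerPoly n (2 * z - 1 / 2)) := by
  rw [← two_pow_mul_eulerPoly_sub_half]
  exact ⟨bernoulliSum_eq_eulerPoly n z, rfl⟩
end

section
/- For every nonnegative integer n and every complex number z, ∑_{k=1}^{n} 2^{2k-1} · C(2n,2k-1) · B_{2k-1}(z) = ∑_{k=1}^{n} k · 2^{2k} · C(2n,2k) · E_{2k-1}(z), where C(n,k) denotes the binomial coefficient. -/
open Finset Polynomial

noncomputable def Bc (m : ℕ) : Polynomial ℂ :=
  (Polynomial.bernoulli m).map (algebraMap ℚ ℂ)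

lemma bernoulliPoly_eq (m : ℕ) (z : ℂ) : bernoulliPoly m z = (Bc m).eval z := by
  simp [bernoulliPoly, Bc, Polynomial.aeval_def, Polynomial.eval_map]

lemma Bc_diff (m : ℕ) (z : ℂ) :
    (Bc m).eval (z + 1) = (Bc m).eval z + m * z ^ (m - 1) := by
  have hq : (Polynomial.bernoulli m).comp (X + 1) =
      Polynomial.bernoulli m + (m : ℚ[X]) * X ^ (m - 1) := by
    apply Polynomial.funext
    intro x
    have := Polynomial.bernoulli_eval_one_add m x
    simp [Polynomial.eval_comp, add_comm x 1, this]
  have := congrArg (fun p => (p.map (algebraMap ℚ ℂ)).eval z) hq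
  simpa [Bc, Polynomial.eval_comp, Polynomial.eval_map, Polynomial.map_comp] using this

lemma Bc_zero_eval (m : ℕ) : (Bc m).eval 0 = ((_root_.bernoulli m : ℚ) : ℂ) := by
  rw [Bc, Polynomial.eval_map]
  rw [show (0:ℂ) = algebraMap ℚ ℂ 0 by simp, Polynomial.eval₂_at_apply]
  simp [Polynomial.bernoulli_eval_zero]

lemma Bc_def_eval (m : ℕ) (y : ℂ) :
    (Bc m).eval y = ∑ i ∈ range (m + 1),
      ((_root_.bernoulli i : ℚ) : ℂ) * (m.choose i : ℂ) * y ^ (m - i) := by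
  rw [Bc, Polynomial.bernoulli, Polynomial.map_sum, Polynomial.eval_finset_sum]
  refine sum_congr rfl fun i _ => ?_
  simp [Polynomial.map_monomial, Polynomial.eval_monomial]

lemma Bc_zero_poly : (Bc 0) = 1 := by
  simp [Bc]

-- p periodic with period c ≠ 0 implies constant
lemma eval_const_of_periodic (p : Polynomial ℂ) (c : ℂ) (hc : c ≠ 0)
    (h : ∀ z, p.eval (z + c) = p.eval z) (z : ℂ) : p.eval z = p.eval 0 := by
  have key : p - C (p.eval 0) = 0 := by
    apply Polynomial.eq_zero_of_infinite_isRoot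
    have hroot : ∀ k : ℕ, (p - C (p.eval 0)).IsRoot (k * c) := by
      intro k
      induction k with
      | zero => simp [Polynomial.IsRoot]
      | succ k ih =>
        simp only [Polynomial.IsRoot, Polynomial.eval_sub, Polynomial.eval_C] at ih ⊢
        rw [show (((k+1:ℕ)):ℂ) * c = (k:ℂ)*c + c by push_cast; ring, h]
        exact ih
    have hinj : Function.Injective (fun k : ℕ => (k : ℂ) * c) := by
      intro a b hab
      simp only [mul_left_inj' hc] at hab
      exact_mod_cast hab
    exact Set.Infinite.mono (fun x hx => by
      obtain ⟨k, rfl⟩ := hx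
      exact hroot k) (Set.infinite_range_of_injective hinj)
  have := congrArg (Polynomial.eval z) key
  simpa [sub_eq_zero] using this

lemma eval_zero_of_antiperiodic (p : Polynomial ℂ) (h : ∀ z, p.eval (z + 1) = -p.eval z)
    (z : ℂ) : p.eval z = 0 := by
  have h2 : ∀ w : ℂ, p.eval (w + 2) = p.eval w := by
    intro w
    have := h (w + 1)
    rw [h w] at this
    calc p.eval (w + 2) = p.eval (w + 1 + 1) := by ring_nf
    _ = p.eval w := by rw [this]; ring
  have hconst := eval_const_of_periodic p 2 two_ne_zero h2
  have h0 : p.eval 0 = 0 := by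
    have := h (-1)
    rw [hconst (-1)] at this
    simp at this
    linear_combination this / 2
  rw [hconst z, h0]
lemma choose_mul_pow_sum (m : ℕ) (w y : ℂ) :
    ∑ j ∈ range (m + 1), (m.choose j : ℂ) * (j : ℂ) * w ^ (j - 1) * y ^ (m - j)
      = m * (w + y) ^ (m - 1) := by
  cases m with
  | zero => simp
  | succ m =>
    rw [Finset.sum_range_succ']
    simp only [Nat.cast_zero, mul_zero, zero_mul, add_zero, Nat.choose_zero_right]
    have key : ∀ i, ((m + 1).choose (i + 1) : ℂ) * ((i : ℂ) + 1) = (m + 1) * (m.choose i : ℂ) := by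
      intro i
      have := Nat.add_one_mul_choose_eq m i
      have h2 : (((m + 1) * m.choose i : ℕ) : ℂ) = (((m + 1).choose (i + 1) * (i + 1) : ℕ) : ℂ) := by
        exact_mod_cast congrArg (Nat.cast (R := ℂ)) this
      push_cast at h2
      linear_combination -h2
    have hrhs : ((m + 1 : ℕ) : ℂ) * (w + y) ^ m
        = ∑ i ∈ range (m + 1), ((m + 1 : ℕ) : ℂ) * ((m.choose i : ℂ) * (w ^ i * y ^ (m - i))) := by
      rw [add_pow, Finset.mul_sum]
      refine sum_congr rfl fun i _ => by ring
    simp only [Nat.add_sub_cancel, Nat.succ_sub_one]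
    rw [hrhs]
    push_cast
    refine sum_congr rfl fun i _ => ?_
    have := key i
    push_cast at this ⊢
    linear_combination (w ^ i * y ^ (m - i)) * this

lemma Bc_add (m : ℕ) (y z : ℂ) :
    (Bc m).eval (z + y)
      = ∑ j ∈ range (m + 1), (m.choose j : ℂ) * (Bc j).eval z * y ^ (m - j) := by
  set p : Polynomial ℂ := (Bc m).comp (X + C y)
      - ∑ j ∈ range (m + 1), C ((m.choose j : ℂ) * y ^ (m - j)) * Bc j with hp
  have evalp : ∀ w : ℂ, p.eval w = (Bc m).eval (w + y)
      - ∑ j ∈ range (m + 1), (m.choose j : ℂ) * (Bc j).eval w * y ^ (m - j) := by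
    intro w
    simp only [hp, Polynomial.eval_sub, Polynomial.eval_comp, Polynomial.eval_add,
      Polynomial.eval_X, Polynomial.eval_C, Polynomial.eval_finset_sum, Polynomial.eval_mul]
    congr 1
    exact sum_congr rfl fun j _ => by ring
  have hper : ∀ w : ℂ, p.eval (w + 1) = p.eval w := by
    intro w
    rw [evalp, evalp, show w + 1 + y = (w + y) + 1 by ring, Bc_diff]
    have hs : ∑ j ∈ range (m + 1), (m.choose j : ℂ) * (Bc j).eval (w + 1) * y ^ (m - j)
        = ∑ j ∈ range (m + 1), (m.choose j : ℂ) * (Bc j).eval w * y ^ (m - j)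
          + m * (w + y) ^ (m - 1) := by
      rw [← choose_mul_pow_sum m w y, ← Finset.sum_add_distrib]
      refine sum_congr rfl fun j _ => ?_
      rw [Bc_diff]
      ring
    rw [hs]
    ring
  have hz := eval_const_of_periodic p 1 one_ne_zero hper z
  have h0 : p.eval 0 = 0 := by
    rw [evalp, zero_add, Bc_def_eval]
    rw [sub_eq_zero]
    refine sum_congr rfl fun j _ => ?_
    rw [Bc_zero_eval]
    ring
  have := evalp z
  rw [hz, h0] at this
  linear_combination -this
lemma Bc_half_diff (m : ℕ) (z : ℂ) :
    (Bc m).eval (z + 1/2) - (Bc m).eval (z - 1/2)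
      = (2:ℂ)^m/2 * ((Bc m).eval (z/2 + 3/4) - (Bc m).eval (z/2 - 1/4)) := by
  set p : Polynomial ℂ := (Bc m).comp (C 2 * X)
      - C ((2:ℂ)^m/2) * ((Bc m) + (Bc m).comp (X + C (1/2))) with hp
  have evalp : ∀ w : ℂ, p.eval w = (Bc m).eval (2*w)
      - (2:ℂ)^m/2 * ((Bc m).eval w + (Bc m).eval (w + 1/2)) := by
    intro w
    simp [hp, Polynomial.eval_comp]
  have hkey : ∀ w : ℂ, (m:ℂ) * (2*w)^(m-1) = (2:ℂ)^m/2 * ((m:ℂ) * w^(m-1)) := by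
    intro w
    cases m with
    | zero => simp
    | succ m =>
      simp only [Nat.add_sub_cancel, mul_pow, pow_succ]
      push_cast
      ring
  have hper : ∀ w : ℂ, p.eval (w + 1/2) = p.eval w := by
    intro w
    rw [evalp, evalp]
    rw [show 2*(w+1/2) = 2*w+1 by ring, Bc_diff]
    rw [show w+1/2+1/2 = w+1 by ring, Bc_diff]
    linear_combination hkey w
  have h1 := eval_const_of_periodic p (1/2) (by norm_num) hper (z/2 + 1/4)
  have h2 := eval_const_of_periodic p (1/2) (by norm_num) hper (z/2 - 1/4)
  have heq : p.eval (z/2 + 1/4) = p.eval (z/2 - 1/4) := h1.trans h2.symm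
  rw [evalp, evalp] at heq
  rw [show 2*(z/2+1/4) = z+1/2 by ring, show z/2+1/4+1/2 = z/2+3/4 by ring,
    show 2*(z/2-1/4) = z-1/2 by ring, show z/2-1/4+1/2 = z/2+1/4 by ring] at heq
  linear_combination heq

lemma alt_pow_sum : ∀ i k : ℕ, i < k →
    ∑ j ∈ range (k+1), (-1:ℂ)^j * (k.choose j : ℂ) * (j:ℂ)^i = 0 := by
  intro i
  induction i using Nat.strong_induction_on with
  | _ i IH =>
    intro k hk
    match i with
    | 0 =>
      have h := Int.alternating_sum_range_choose (n := k)
      rw [if_neg (by omega)] at h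
      have h2 := congrArg (Int.cast : ℤ → ℂ) h
      push_cast at h2
      simpa using h2
    | i + 1 =>
      obtain ⟨k', rfl⟩ : ∃ k', k = k' + 1 := ⟨k - 1, by omega⟩
      have hik : i < k' := by omega
      rw [Finset.sum_range_succ']
      have h0 : (-1:ℂ)^0 * ((k'+1).choose 0 : ℂ) * ((0:ℕ):ℂ)^(i+1) = 0 := by
        simp
      rw [h0, add_zero]
      have key : ∀ l : ℕ, ((k'+1).choose (l+1) : ℂ) * ((l:ℂ)+1) = ((k':ℂ)+1) * (k'.choose l : ℂ) := by
        intro l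
        have := Nat.add_one_mul_choose_eq k' l
        have h2 := congrArg (Nat.cast : ℕ → ℂ) this
        push_cast at h2
        linear_combination -h2
      have hterm : ∀ l ∈ range (k'+1), (-1:ℂ)^(l+1) * ((k'+1).choose (l+1) : ℂ) * ((l+1:ℕ):ℂ)^(i+1)
          = ∑ t ∈ range (i+1), (-((k':ℂ)+1) * (i.choose t : ℂ))
              * ((-1:ℂ)^l * (k'.choose l : ℂ) * (l:ℂ)^t) := by
        intro l _
        have hb : ((l:ℂ)+1)^i = ∑ t ∈ range (i+1), (l:ℂ)^t * (i.choose t : ℂ) := by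
          have := add_pow (l:ℂ) 1 i
          simpa using this
        have hc : ((l+1:ℕ):ℂ) = (l:ℂ)+1 := by push_cast; ring
        rw [hc]
        calc (-1:ℂ)^(l+1) * ((k'+1).choose (l+1) : ℂ) * ((l:ℂ)+1)^(i+1)
            = (-((k':ℂ)+1) * ((-1:ℂ)^l * (k'.choose l : ℂ))) * ((l:ℂ)+1)^i := by
              rw [pow_succ, pow_succ]
              linear_combination ((-1:ℂ)^l * (-1) * ((l:ℂ)+1)^i) * key l
          _ = _ := by
              rw [hb, Finset.mul_sum]
              exact sum_congr rfl fun t _ => by ring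
      rw [Finset.sum_congr rfl hterm, Finset.sum_comm]
      refine Finset.sum_eq_zero fun t ht => ?_
      have ht' : t < i + 1 := Finset.mem_range.mp ht
      rw [← Finset.mul_sum, IH t (by omega) k' (by omega), mul_zero]

noncomputable def gE (m k : ℕ) (z : ℂ) : ℂ :=
  ∑ j ∈ range (k+1), (-1:ℂ)^j * (k.choose j : ℂ) * (z + j)^m

lemma gE_vanish (m k : ℕ) (hk : m < k) (z : ℂ) : gE m k z = 0 := by
  unfold gE
  have hexp : ∀ j ∈ range (k+1), (-1:ℂ)^j * (k.choose j : ℂ) * (z + j)^m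
      = ∑ t ∈ range (m+1), ((m.choose t : ℂ) * z^(m-t))
          * ((-1:ℂ)^j * (k.choose j : ℂ) * (j:ℂ)^t) := by
    intro j _
    have := add_pow (j:ℂ) z m
    rw [add_comm (j:ℂ) z] at this
    rw [this, Finset.mul_sum]
    exact sum_congr rfl fun t _ => by ring
  rw [Finset.sum_congr rfl hexp, Finset.sum_comm]
  refine Finset.sum_eq_zero fun t ht => ?_
  rw [← Finset.mul_sum, alt_pow_sum t k (by have := Finset.mem_range.mp ht; omega), mul_zero]

lemma gE_fw (m k : ℕ) (z : ℂ) :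
    gE m k z = (-1:ℂ)^k * (fwdDiff (1:ℂ))^[k] (fun w : ℂ => w^m) z := by
  rw [fwdDiff_iter_eq_sum_shift, Finset.mul_sum]
  unfold gE
  refine sum_congr rfl fun j hj => ?_
  have hj' : j ≤ k := by have := Finset.mem_range.mp hj; omega
  have hsmul : (((-1:ℤ)^(k-j) * (k.choose j : ℤ)) • ((z + j • (1:ℂ))^m))
      = ((-1:ℂ)^(k-j) * (k.choose j : ℂ)) * ((z + (j:ℂ))^m) := by
    rw [zsmul_eq_mul, nsmul_eq_mul, mul_one]
    push_cast
    ring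
  rw [hsmul]
  have hsign : (-1:ℂ)^k = (-1:ℂ)^(k-j) * (-1:ℂ)^j := by
    rw [← pow_add]
    congr 1
    omega
  have hsq : (-1:ℂ)^(k-j) * (-1:ℂ)^(k-j) = 1 := by
    rw [← pow_add, ← two_mul]
    exact Even.neg_one_pow ⟨k-j, by ring⟩
  rw [hsign]
  rw [show ((-1:ℂ)^(k-j) * (-1:ℂ)^j) * ((-1:ℂ)^(k-j) * (k.choose j:ℂ) * (z+(j:ℂ))^m)
      = ((-1:ℂ)^(k-j) * (-1:ℂ)^(k-j)) * ((-1:ℂ)^j * (k.choose j:ℂ) * (z+(j:ℂ))^m) from by ring,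
    hsq, one_mul]

lemma gE_rec (m k : ℕ) (z : ℂ) : gE m k (z+1) = gE m k z - gE m (k+1) z := by
  rw [gE_fw, gE_fw, gE_fw]
  have hstep : (fwdDiff (1:ℂ))^[k+1] (fun w : ℂ => w^m) z
      = (fwdDiff (1:ℂ))^[k] (fun w : ℂ => w^m) (z+1)
        - (fwdDiff (1:ℂ))^[k] (fun w : ℂ => w^m) z := by
    rw [Function.iterate_succ_apply']
    rfl
  rw [hstep, pow_succ]
  ring
lemma euler_repr (m : ℕ) (w : ℂ) :
    eulerPoly m w = ∑ k ∈ range (m+1), (1/2^k : ℂ) * gE m k w := rfl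

lemma euler_fe (m : ℕ) (z : ℂ) : eulerPoly m (z+1) + eulerPoly m z = 2 * z^m := by
  rw [euler_repr, euler_repr, ← Finset.sum_add_distrib]
  have hterm : ∀ k ∈ range (m+1), (1/2^k:ℂ) * gE m k (z+1) + (1/2^k:ℂ) * gE m k z
      = 2 * ((1/2^k:ℂ) * gE m k z) - 2 * ((1/2^(k+1):ℂ) * gE m (k+1) z) := by
    intro k _
    rw [gE_rec]
    have h : (2:ℂ) * (1/2^(k+1)) = 1/2^k := by
      rw [pow_succ]
      field_simp
      try ring
    linear_combination (gE m (k+1) z) * h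
  rw [Finset.sum_congr rfl hterm]
  rw [Finset.sum_range_sub' (fun k => 2 * ((1/2^k:ℂ) * gE m k z)) (m+1)]
  rw [gE_vanish m (m+1) (by omega)]
  have h0 : gE m 0 z = z^m := by unfold gE; simp
  rw [h0]
  norm_num

lemma euler_eq (m : ℕ) (z : ℂ) :
    eulerPoly m z = 2^(m+1)/((m:ℂ)+1)
      * ((Bc (m+1)).eval (z/2 + 1/2) - (Bc (m+1)).eval (z/2)) := by
  set c : ℂ := 2^(m+1)/((m:ℂ)+1) with hc
  have hm1 : ((m:ℂ)+1) ≠ 0 := Nat.cast_add_one_ne_zero m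
  set pE : Polynomial ℂ := ∑ k ∈ range (m+1), C ((1:ℂ)/2^k) *
      ∑ j ∈ range (k+1), C ((-1:ℂ)^j * (k.choose j:ℂ)) * (X + C (j:ℂ))^m with hpE
  have hEeval : ∀ w : ℂ, pE.eval w = eulerPoly m w := by
    intro w
    simp only [hpE, eulerPoly, Polynomial.eval_finset_sum, Polynomial.eval_mul,
      Polynomial.eval_C, Polynomial.eval_pow, Polynomial.eval_add, Polynomial.eval_X]
  set pF : Polynomial ℂ := C c * ((Bc (m+1)).comp (C (1/2:ℂ) * X + C (1/2:ℂ))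
      - (Bc (m+1)).comp (C (1/2:ℂ) * X)) with hpF
  have hFeval : ∀ w : ℂ, pF.eval w
      = c * ((Bc (m+1)).eval (w/2 + 1/2) - (Bc (m+1)).eval (w/2)) := by
    intro w
    simp only [hpF, Polynomial.eval_mul, Polynomial.eval_C, Polynomial.eval_sub,
      Polynomial.eval_comp, Polynomial.eval_add, Polynomial.eval_X]
    rw [show (1/2:ℂ) * w = w/2 by ring]
  have hFfe : ∀ w : ℂ, pF.eval (w+1) + pF.eval w = 2 * w^m := by
    intro w
    rw [hFeval, hFeval]
    rw [show (w+1)/2 + 1/2 = w/2 + 1 by ring, show (w+1)/2 = w/2 + 1/2 by ring,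
      Bc_diff (m+1) (w/2)]
    simp only [Nat.add_sub_cancel]
    have hcast : ((m+1:ℕ):ℂ) = (m:ℂ)+1 := by push_cast; ring
    rw [hcast, hc, div_pow]
    have h2m : (2:ℂ)^m ≠ 0 := pow_ne_zero m two_ne_zero
    field_simp
    ring
  have hq : ∀ w : ℂ, (pE - pF).eval (w+1) = -((pE - pF).eval w) := by
    intro w
    simp only [Polynomial.eval_sub]
    rw [hEeval, hEeval]
    linear_combination euler_fe m w - hFfe w
  have h0 := eval_zero_of_antiperiodic (pE - pF) hq z
  simp only [Polynomial.eval_sub] at h0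
  rw [hEeval, hFeval] at h0
  linear_combination h0
lemma sum_odd_reindex (n : ℕ) (g : ℕ → ℂ) :
    ∑ j ∈ range (2*n+1), (if Odd j then g j else 0) = ∑ k ∈ Icc 1 n, g (2*k-1) := by
  induction n with
  | zero => simp
  | succ n ih =>
    rw [show 2*(n+1)+1 = (2*n+1)+1+1 by omega, Finset.sum_range_succ, Finset.sum_range_succ, ih,
      Finset.sum_Icc_succ_top (by omega)]
    have h1 : Odd (2*n+1) := ⟨n, by omega⟩
    have h2 : ¬ Odd (2*n+1+1) := by rw [Nat.odd_iff]; omega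
    rw [if_pos h1, if_neg h2, show 2*(n+1)-1 = 2*n+1 by omega]
    ring

lemma sum_even_reindex (n : ℕ) (g : ℕ → ℂ) :
    ∑ j ∈ range (2*n+1), (if Odd j then 0 else g j) = g 0 + ∑ k ∈ Icc 1 n, g (2*k) := by
  induction n with
  | zero => simp
  | succ n ih =>
    rw [show 2*(n+1)+1 = (2*n+1)+1+1 by omega, Finset.sum_range_succ, Finset.sum_range_succ, ih,
      Finset.sum_Icc_succ_top (by omega)]
    have h1 : Odd (2*n+1) := ⟨n, by omega⟩
    have h2 : ¬ Odd (2*n+1+1) := by rw [Nat.odd_iff]; omega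
    rw [if_pos h1, if_neg h2, show 2*(n+1) = 2*n+1+1 by omega]
    ring

lemma Bc_scaled_sum (N : ℕ) (c w : ℂ) (hc : c ≠ 0) :
    ∑ j ∈ range (N+1), (N.choose j : ℂ) * (Bc j).eval w * c^j
      = c^N * (Bc N).eval (w + 1/c) := by
  rw [Bc_add N (1/c) w, Finset.mul_sum]
  refine (sum_congr rfl fun j hj => ?_).symm
  have hj' : j ≤ N := by have := Finset.mem_range.mp hj; omega
  have hpow : c^N * (1/c)^(N-j) = c^j := by
    rw [div_pow, one_pow, show c^N = c^j * c^(N-j) from by rw [← pow_add]; congr 1; omega]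
    field_simp
  linear_combination ((N.choose j:ℂ) * (Bc j).eval w) * hpow

lemma neg_base_pow_even (c : ℂ) (n : ℕ) : ((-c))^(2*n) = c^(2*n) := by
  rw [neg_pow, Even.neg_one_pow ⟨n, by ring⟩, one_mul]

lemma Bc_scaled_sum_neg (n : ℕ) (c w : ℂ) (hc : c ≠ 0) :
    ∑ j ∈ range (2*n+1), ((2*n).choose j : ℂ) * (Bc j).eval w * ((-1:ℂ)^j * c^j)
      = c^(2*n) * (Bc (2*n)).eval (w - 1/c) := by
  calc ∑ j ∈ range (2*n+1), ((2*n).choose j : ℂ) * (Bc j).eval w * ((-1:ℂ)^j * c^j)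
      = ∑ j ∈ range (2*n+1), ((2*n).choose j : ℂ) * (Bc j).eval w * (-c)^j := by
        refine sum_congr rfl fun j _ => ?_
        rw [neg_pow c j]
    _ = (-c)^(2*n) * (Bc (2*n)).eval (w + 1/(-c)) := Bc_scaled_sum (2*n) (-c) w (by simpa using hc)
    _ = c^(2*n) * (Bc (2*n)).eval (w - 1/c) := by
        rw [neg_base_pow_even, show w + 1/(-c) = w - 1/c from by rw [div_neg]; ring]

theorem stmt6 (n : ℕ) (z : ℂ) :
    ∑ k ∈ Icc 1 n, (2 : ℂ) ^ (2 * k - 1) * ((2 * n).choose (2 * k - 1) : ℂ) *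
        bernoulliPoly (2 * k - 1) z
      = ∑ k ∈ Icc 1 n, (k : ℂ) * 2 ^ (2 * k) * ((2 * n).choose (2 * k) : ℂ) *
        eulerPoly (2 * k - 1) z := by
  -- LHS as odd-filtered range sum
  have hL1 : ∑ k ∈ Icc 1 n, (2 : ℂ) ^ (2 * k - 1) * ((2 * n).choose (2 * k - 1) : ℂ) *
        bernoulliPoly (2 * k - 1) z
      = ∑ j ∈ range (2*n+1), (if Odd j then (2:ℂ)^j * ((2*n).choose j:ℂ) * (Bc j).eval z else 0) := by
    rw [sum_odd_reindex n (fun j => (2:ℂ)^j * ((2*n).choose j:ℂ) * (Bc j).eval z)]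
    exact sum_congr rfl fun k _ => by rw [bernoulliPoly_eq]
  have hSp := Bc_scaled_sum (2*n) 2 z two_ne_zero
  have hSm := Bc_scaled_sum_neg n 2 z two_ne_zero
  -- 2 * LHS = Sp - Sm
  have h2L : 2 * (∑ j ∈ range (2*n+1),
        (if Odd j then (2:ℂ)^j * ((2*n).choose j:ℂ) * (Bc j).eval z else 0))
      = 2^(2*n) * (Bc (2*n)).eval (z + 1/2) - 2^(2*n) * (Bc (2*n)).eval (z - 1/2) := by
    rw [← hSp, ← hSm, Finset.mul_sum, ← Finset.sum_sub_distrib]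
    refine sum_congr rfl fun j _ => ?_
    rcases Nat.even_or_odd j with he | ho
    · rw [if_neg (Nat.not_odd_iff_even.mpr he), Even.neg_one_pow he]
      ring
    · rw [if_pos ho, Odd.neg_one_pow ho]
      ring
  -- RHS transformation
  have hR1 : ∑ k ∈ Icc 1 n, (k : ℂ) * 2 ^ (2 * k) * ((2 * n).choose (2 * k) : ℂ) *
        eulerPoly (2 * k - 1) z
      = ∑ k ∈ Icc 1 n, (4:ℂ)^(2*k)/2 * ((2*n).choose (2*k):ℂ)
          * ((Bc (2*k)).eval (z/2 + 1/2) - (Bc (2*k)).eval (z/2)) := by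
    refine sum_congr rfl fun k hk => ?_
    have hk1 : 1 ≤ k := (Finset.mem_Icc.mp hk).1
    have e1 : (2*k-1)+1 = 2*k := by omega
    have hk0 : (k:ℂ) ≠ 0 := Nat.cast_ne_zero.mpr (by omega)
    rw [euler_eq (2*k-1) z, e1]
    have e2 : ((2*k-1:ℕ):ℂ) + 1 = 2*(k:ℂ) := by
      rw [Nat.cast_sub (by omega)]
      push_cast
      ring
    rw [e2]
    rw [show (4:ℂ)^(2*k) = 2^(2*k) * 2^(2*k) from by rw [← mul_pow]; norm_num]
    field_simp
  have hTp1 := Bc_scaled_sum (2*n) 4 (z/2 + 1/2) (by norm_num)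
  have hTm1 := Bc_scaled_sum_neg n 4 (z/2 + 1/2) (by norm_num)
  have hTp0 := Bc_scaled_sum (2*n) 4 (z/2) (by norm_num)
  have hTm0 := Bc_scaled_sum_neg n 4 (z/2) (by norm_num)
  -- 4 * (even sum) = (Tp1 + Tm1) - (Tp0 + Tm0)
  have h4E : 4 * (∑ j ∈ range (2*n+1), (if Odd j then 0 else
        (4:ℂ)^j/2 * ((2*n).choose j:ℂ) * ((Bc j).eval (z/2 + 1/2) - (Bc j).eval (z/2))))
      = (4^(2*n) * (Bc (2*n)).eval (z/2 + 1/2 + 1/4) + 4^(2*n) * (Bc (2*n)).eval (z/2 + 1/2 - 1/4))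
        - (4^(2*n) * (Bc (2*n)).eval (z/2 + 1/4) + 4^(2*n) * (Bc (2*n)).eval (z/2 - 1/4)) := by
    rw [← hTp1, ← hTm1, ← hTp0, ← hTm0, Finset.mul_sum]
    rw [← Finset.sum_add_distrib, ← Finset.sum_add_distrib, ← Finset.sum_sub_distrib]
    refine sum_congr rfl fun j _ => ?_
    rcases Nat.even_or_odd j with he | ho
    · rw [if_neg (Nat.not_odd_iff_even.mpr he), Even.neg_one_pow he]
      ring
    · rw [if_pos ho, Odd.neg_one_pow ho]
      ring
  -- even sum = RHS sum
  have hEv : ∑ j ∈ range (2*n+1), (if Odd j then 0 else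
        (4:ℂ)^j/2 * ((2*n).choose j:ℂ) * ((Bc j).eval (z/2 + 1/2) - (Bc j).eval (z/2)))
      = ∑ k ∈ Icc 1 n, (4:ℂ)^(2*k)/2 * ((2*n).choose (2*k):ℂ)
          * ((Bc (2*k)).eval (z/2 + 1/2) - (Bc (2*k)).eval (z/2)) := by
    rw [sum_even_reindex n (fun j => (4:ℂ)^j/2 * ((2*n).choose j:ℂ)
      * ((Bc j).eval (z/2 + 1/2) - (Bc j).eval (z/2)))]
    have h0 : (4:ℂ)^0/2 * ((2*n).choose 0:ℂ) * ((Bc 0).eval (z/2 + 1/2) - (Bc 0).eval (z/2)) = 0 := by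
      rw [Bc_zero_poly]
      simp
    rw [h0, zero_add]
  -- multiplication theorem consequence
  have hMul := Bc_half_diff (2*n) z
  -- collect: the four points
  rw [show z/2 + 1/2 + 1/4 = z/2 + 3/4 from by ring,
    show z/2 + 1/2 - 1/4 = z/2 + 1/4 from by ring] at h4E
  -- final computation
  apply mul_left_cancel₀ (two_ne_zero : (2:ℂ) ≠ 0)
  rw [hL1, h2L, hR1, ← hEv]
  have hpow4 : (4:ℂ)^(2*n) = 2^(2*n) * 2^(2*n) := by rw [← mul_pow]; norm_num
  rw [hpow4] at h4E
  linear_combination 2^(2*n) * hMul - h4E / 2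
end
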